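/- Let k be an infinite field, A a left and right noetherian k-algebra satisfying the Nullstellensatz over k, and H = (kˣ)^r a torus acting rationally on A by k-algebra automorphisms. Assume that A has only finitely many H-prime ideals. Then for every prime two-sided ideal P of A the following are equivalent: (i) P is left primitive; (ii) P is locally closed in the prime spectrum of A; (iii) P is maximal under inclusion within its H-stratum {Q : Q a prime two-sided ideal of A with (Q:H) = (P:H)}. -/

import Mathlib

open Pointwise

/-- A subset of a ring is a two-sided ideal: contains 0, closed under addition,
negation, and left/right multiplication by arbitrary ring elements. -/
def IsTwoSidedIdealSet {A : Type*} [Ring A] (I : Set A) : Prop :=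
  (0 : A) ∈ I ∧ (∀ a ∈ I, ∀ b ∈ I, a + b ∈ I) ∧ (∀ a ∈ I, -a ∈ I) ∧
    (∀ a ∈ I, ∀ r : A, r * a ∈ I) ∧ (∀ a ∈ I, ∀ r : A, a * r ∈ I)

/-- `MulSubset I J P` expresses that the product ideal `I·J` is contained in `P`
(for `P` closed under addition this is equivalent to the usual condition). -/
def MulSubset {A : Type*} [Ring A] (I J P : Set A) : Prop :=
  ∀ a ∈ I, ∀ b ∈ J, a * b ∈ P

/-- A two-sided ideal `P` is prime: proper, and `I₁I₂ ⊆ P` implies `I₁ ⊆ P` or `I₂ ⊆ P`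
for all two-sided ideals `I₁, I₂`. -/
def IsPrimeIdealSet {A : Type*} [Ring A] (P : Set A) : Prop :=
  IsTwoSidedIdealSet P ∧ P ≠ Set.univ ∧
    ∀ I J : Set A, IsTwoSidedIdealSet I → IsTwoSidedIdealSet J →
      MulSubset I J P → I ⊆ P ∨ J ⊆ P

/-- A two-sided ideal is `G`-stable if `g • I = I` for all `g ∈ G`. -/
def IsGStable (G : Type*) {A : Type*} [Group G] [Ring A] [MulSemiringAction G A]
    (I : Set A) : Prop :=
  ∀ g : G, g • I = I

/-- A `G`-prime ideal: a proper `G`-stable two-sided ideal `J` such that whenever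
`I₁, I₂` are `G`-stable two-sided ideals with `I₁I₂ ⊆ J`, then `I₁ ⊆ J` or `I₂ ⊆ J`. -/
def IsGPrimeIdealSet (G : Type*) {A : Type*} [Group G] [Ring A] [MulSemiringAction G A]
    (J : Set A) : Prop :=
  IsTwoSidedIdealSet J ∧ IsGStable G J ∧ J ≠ Set.univ ∧
    ∀ I₁ I₂ : Set A, IsTwoSidedIdealSet I₁ → IsGStable G I₁ →
      IsTwoSidedIdealSet I₂ → IsGStable G I₂ →
      MulSubset I₁ I₂ J → I₁ ⊆ J ∨ I₂ ⊆ J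

/-- A two-sided ideal `P` is left primitive if it is the annihilator of a simple
left module. -/
def IsLeftPrimitiveSet {A : Type u} [Ring A] (P : Set A) : Prop :=
  ∃ (M : Type u) (_ : AddCommGroup M) (_ : Module A M),
    IsSimpleModule A M ∧ P = {a : A | ∀ m : M, a • m = 0}

/-- A prime two-sided ideal `P` is locally closed if the intersection of all prime
two-sided ideals properly containing `P` properly contains `P`. -/
def IsLocallyClosedPrime {A : Type*} [Ring A] (P : Set A) : Prop :=
  P ⊂ ⋂₀ {Q : Set A | IsPrimeIdealSet Q ∧ P ⊂ Q}

section Basics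

variable {A : Type*} [Ring A]

namespace IsTwoSidedIdealSet

variable {P : Set A}

lemma zero_mem (hP : IsTwoSidedIdealSet P) : (0:A) ∈ P := hP.1
lemma add_mem (hP : IsTwoSidedIdealSet P) {a b : A} (ha : a ∈ P) (hb : b ∈ P) : a + b ∈ P := hP.2.1 a ha b hb
lemma neg_mem (hP : IsTwoSidedIdealSet P) {a : A} (ha : a ∈ P) : -a ∈ P := hP.2.2.1 a ha
lemma mul_left (hP : IsTwoSidedIdealSet P) {a : A} (ha : a ∈ P) (r : A) : r * a ∈ P := hP.2.2.2.1 a ha r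
lemma mul_right (hP : IsTwoSidedIdealSet P) {a : A} (ha : a ∈ P) (r : A) : a * r ∈ P := hP.2.2.2.2 a ha r

lemma sub_mem (hP : IsTwoSidedIdealSet P) {a b : A} (ha : a ∈ P) (hb : b ∈ P) : a - b ∈ P := by
  rw [sub_eq_add_neg]; exact hP.add_mem ha (hP.neg_mem hb)

lemma toAddSubgroup (hP : IsTwoSidedIdealSet P) : ∃ H : AddSubgroup A, (H : Set A) = P :=
  ⟨{ carrier := P
     zero_mem' := hP.zero_mem
     add_mem' := fun ha hb => hP.add_mem ha hb
     neg_mem' := fun ha => hP.neg_mem ha }, rfl⟩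

lemma eq_univ_of_one_mem (hP : IsTwoSidedIdealSet P) (h1 : (1:A) ∈ P) : P = Set.univ := by
  ext a; simp only [Set.mem_univ, iff_true]
  simpa using hP.mul_left h1 a

lemma sum_mem (hP : IsTwoSidedIdealSet P) {ι : Type*} (s : Finset ι) (f : ι → A) (h : ∀ i ∈ s, f i ∈ P) :
    (∑ i ∈ s, f i) ∈ P :=
  Finset.sum_induction f (· ∈ P) (fun _ _ ha hb => hP.add_mem ha hb) hP.zero_mem h

end IsTwoSidedIdealSet

/-- The two-sided ideal generated by a single element, as a set. -/
def idealGen (c : A) : Set A :=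
  (AddSubgroup.closure {y : A | ∃ r s : A, y = r * c * s} : Set A)

lemma self_mem_idealGen (c : A) : c ∈ idealGen c := by
  apply AddSubgroup.subset_closure
  exact ⟨1, 1, by simp⟩

lemma idealGen_isTwoSided (c : A) : IsTwoSidedIdealSet (idealGen c) := by
  refine ⟨AddSubgroup.zero_mem _, fun a ha b hb => AddSubgroup.add_mem _ ha hb,
    fun a ha => AddSubgroup.neg_mem _ ha, ?_, ?_⟩
  · intro a ha r
    induction ha using AddSubgroup.closure_induction with
    | mem x hx => rcases hx with ⟨p, s, rfl⟩
                  exact AddSubgroup.subset_closure ⟨r * p, s, by simp [mul_assoc]⟩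
    | zero => rw [mul_zero]; exact AddSubgroup.zero_mem _
    | add x y _ _ hx hy => rw [mul_add]; exact AddSubgroup.add_mem _ hx hy
    | neg x _ hx => rw [mul_neg]; exact AddSubgroup.neg_mem _ hx
  · intro a ha r
    induction ha using AddSubgroup.closure_induction with
    | mem x hx => rcases hx with ⟨p, s, rfl⟩
                  exact AddSubgroup.subset_closure ⟨p, s * r, by simp [mul_assoc]⟩
    | zero => rw [zero_mul]; exact AddSubgroup.zero_mem _
    | add x y _ _ hx hy => rw [add_mul]; exact AddSubgroup.add_mem _ hx hy
    | neg x _ hx => rw [neg_mul]; exact AddSubgroup.neg_mem _ hx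

lemma idealGen_subset {J : Set A} (hJ : IsTwoSidedIdealSet J) {c : A} (hc : c ∈ J) :
    idealGen c ⊆ J := by
  obtain ⟨H, hH⟩ := hJ.toAddSubgroup
  intro x hx
  rw [← hH]
  refine AddSubgroup.closure_le H |>.mpr ?_ hx
  rintro y ⟨r, s, rfl⟩
  rw [hH]
  exact hJ.mul_right (hJ.mul_left hc r) s

/-- Elementwise primality criterion. -/
lemma IsPrimeIdealSet.elem {P : Set A} (hP : IsPrimeIdealSet P) {u v : A}
    (h : ∀ x : A, u * x * v ∈ P) : u ∈ P ∨ v ∈ P := by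
  have hmul : MulSubset (idealGen u) (idealGen v) P := by
    intro α hα β hβ
    induction hα using AddSubgroup.closure_induction with
    | mem x hx =>
        rcases hx with ⟨r, s, rfl⟩
        induction hβ using AddSubgroup.closure_induction with
        | mem y hy =>
            rcases hy with ⟨p, q, rfl⟩
            have : r * u * s * (p * v * q) = r * (u * (s * p) * v) * q := by simp [mul_assoc]
            rw [this]
            exact hP.1.mul_right (hP.1.mul_left (h (s*p)) r) q
        | zero => simpa using hP.1.zero_mem
        | add y z _ _ hy hz => rw [mul_add]; exact hP.1.add_mem hy hz
        | neg y _ hy => rw [mul_neg]; exact hP.1.neg_mem hy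
    | zero => simpa using hP.1.zero_mem
    | add x y _ _ hx hy => rw [add_mul]; exact hP.1.add_mem hx hy
    | neg x _ hx => rw [neg_mul]; exact hP.1.neg_mem hx
  rcases hP.2.2 _ _ (idealGen_isTwoSided u) (idealGen_isTwoSided v) hmul with h1 | h1
  · exact Or.inl (h1 (self_mem_idealGen u))
  · exact Or.inr (h1 (self_mem_idealGen v))

lemma IsPrimeIdealSet.one_not_mem {P : Set A} (hP : IsPrimeIdealSet P) : (1:A) ∉ P :=
  fun h => hP.2.1 (hP.1.eq_univ_of_one_mem h)

end Basics

section Core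

variable (G : Type*) {A : Type*} [Group G] [Ring A] [MulSemiringAction G A]

def coreSet (Q : Set A) : Set A := ⋂ g : G, g • Q

variable {G}

lemma mem_coreSet_iff {Q : Set A} {x : A} : x ∈ coreSet G Q ↔ ∀ g : G, g⁻¹ • x ∈ Q := by
  simp only [coreSet, Set.mem_iInter]
  exact forall_congr' fun g => Set.mem_smul_set_iff_inv_smul_mem

lemma coreSet_subset (Q : Set A) : coreSet G Q ⊆ Q := by
  intro x hx
  have := mem_coreSet_iff.mp hx (1 : G)
  simpa using this

lemma coreSet_isTwoSided {Q : Set A} (hQ : IsTwoSidedIdealSet Q) :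
    IsTwoSidedIdealSet (coreSet G Q) := by
  refine ⟨?_, ?_, ?_, ?_, ?_⟩
  · exact mem_coreSet_iff.mpr fun g => by rw [smul_zero]; exact hQ.zero_mem
  · intro a ha b hb
    exact mem_coreSet_iff.mpr fun g => by
      rw [smul_add]; exact hQ.add_mem (mem_coreSet_iff.mp ha g) (mem_coreSet_iff.mp hb g)
  · intro a ha
    exact mem_coreSet_iff.mpr fun g => by
      rw [smul_neg]; exact hQ.neg_mem (mem_coreSet_iff.mp ha g)
  · intro a ha r
    exact mem_coreSet_iff.mpr fun g => by
      rw [smul_mul']; exact hQ.mul_left (mem_coreSet_iff.mp ha g) _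
  · intro a ha r
    exact mem_coreSet_iff.mpr fun g => by
      rw [smul_mul']; exact hQ.mul_right (mem_coreSet_iff.mp ha g) _

lemma coreSet_isGStable (Q : Set A) : IsGStable G (coreSet G Q) := by
  intro g
  ext x
  rw [Set.mem_smul_set_iff_inv_smul_mem, mem_coreSet_iff, mem_coreSet_iff]
  constructor
  · intro h h'
    have := h (g⁻¹ * h')
    rwa [mul_inv_rev, inv_inv, mul_smul, smul_inv_smul] at this
  · intro h h'
    have := h (g * h')
    rwa [mul_inv_rev, mul_smul] at this

lemma coreSet_mono {P Q : Set A} (h : P ⊆ Q) : coreSet G P ⊆ coreSet G Q := by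
  intro x hx
  exact mem_coreSet_iff.mpr fun g => h (mem_coreSet_iff.mp hx g)

lemma mem_coreSet_of_stable {I : Set A} (hI : IsGStable G I) {x : A} (hx : x ∈ I) :
    x ∈ coreSet G I := by
  refine mem_coreSet_iff.mpr fun g => ?_
  rw [← hI g⁻¹]
  exact Set.smul_mem_smul_set hx

lemma coreSet_isGPrime {Q : Set A} (hQ : IsPrimeIdealSet Q) :
    IsGPrimeIdealSet G (coreSet G Q) := by
  refine ⟨coreSet_isTwoSided hQ.1, coreSet_isGStable Q, ?_, ?_⟩
  · intro h
    apply hQ.2.1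
    exact Set.eq_univ_of_univ_subset (h ▸ coreSet_subset Q)
  · intro I₁ I₂ h₁ hs₁ h₂ hs₂ hmul
    have : MulSubset I₁ I₂ Q := fun a ha b hb => coreSet_subset Q (hmul a ha b hb)
    rcases hQ.2.2 _ _ h₁ h₂ this with h | h
    · exact Or.inl fun x hx => mem_coreSet_iff.mpr fun g => h (by
        rw [← hs₁ g⁻¹]; exact Set.smul_mem_smul_set hx)
    · exact Or.inr fun x hx => mem_coreSet_iff.mpr fun g => h (by
        rw [← hs₂ g⁻¹]; exact Set.smul_mem_smul_set hx)

/-- Key finiteness lemma: a common element outside `P` for finitely many ideals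
    not contained in `P`. -/
lemma exists_common_elem {P : Set A} (hP : IsPrimeIdealSet P)
    (F : Finset (Set A)) (hF : ∀ J ∈ F, IsTwoSidedIdealSet J ∧ ¬ J ⊆ P) :
    ∃ c : A, c ∉ P ∧ ∀ J ∈ F, c ∈ J := by
  classical
  induction F using Finset.induction_on with
  | empty => exact ⟨1, hP.one_not_mem, by simp⟩
  | insert _ _ hJ₀ =>
    rename_i J₀ F' hF'
    obtain ⟨c', hc'P, hc'mem⟩ := hF' fun J hJ => hF J (Finset.mem_insert_of_mem hJ)
    obtain ⟨hJ₀ts, hJ₀P⟩ := hF J₀ (Finset.mem_insert_self _ _)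
    by_cases hms : MulSubset (idealGen c') J₀ P
    · rcases hP.2.2 _ _ (idealGen_isTwoSided c') hJ₀ts hms with h | h
      · exact absurd (h (self_mem_idealGen c')) hc'P
      · exact absurd h hJ₀P
    · simp only [MulSubset, not_forall] at hms
      obtain ⟨α, hα, β, hβ, hαβ⟩ := hms
      refine ⟨α * β, hαβ, ?_⟩
      intro J hJ
      rcases Finset.mem_insert.mp hJ with rfl | hJ
      · exact hJ₀ts.mul_left hβ α
      · exact (hF J (Finset.mem_insert_of_mem hJ)).1.mul_right
          (idealGen_subset (hF J (Finset.mem_insert_of_mem hJ)).1 (hc'mem J hJ) hα) β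

/-- (iii) ⇒ (ii): maximal in the stratum implies locally closed. -/
lemma max_implies_lc {P : Set A} (hP : IsPrimeIdealSet P)
    (hfin : {J : Set A | IsGPrimeIdealSet G J}.Finite)
    (hmax : ∀ Q : Set A, IsPrimeIdealSet Q → coreSet G Q = coreSet G P → P ⊆ Q → Q = P) :
    IsLocallyClosedPrime P := by
  classical
  set 𝒮 : Set (Set A) := {J | IsGPrimeIdealSet G J ∧ ¬ J ⊆ P} with h𝒮
  have h𝒮fin : 𝒮.Finite := hfin.subset fun J hJ => hJ.1
  obtain ⟨c, hcP, hc⟩ := exists_common_elem hP h𝒮fin.toFinset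
    (fun J hJ => by
      rw [Set.Finite.mem_toFinset] at hJ
      exact ⟨hJ.1.1, hJ.2⟩)
  have hsub : P ⊆ ⋂₀ {Q : Set A | IsPrimeIdealSet Q ∧ P ⊂ Q} := by
    intro x hx Q hQ
    exact hQ.2.1 hx
  rw [IsLocallyClosedPrime, Set.ssubset_iff_of_subset hsub]
  refine ⟨c, ?_, hcP⟩
  intro Q hQ
  rcases hQ with ⟨hQprime, hPQ⟩
  have hcore : ¬ coreSet G Q ⊆ P := by
    intro hcp
    have h1 : coreSet G Q ⊆ coreSet G P := by
      intro x hx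
      refine mem_coreSet_iff.mpr fun g => ?_
      exact hcp (mem_coreSet_iff.mp (mem_coreSet_of_stable (coreSet_isGStable Q) hx) g)
    have h2 : coreSet G P ⊆ coreSet G Q := coreSet_mono hPQ.1
    have := hmax Q hQprime (le_antisymm h1 h2) hPQ.1
    exact hPQ.2 (by rw [this])
  have : coreSet G Q ∈ 𝒮 := ⟨coreSet_isGPrime hQprime, hcore⟩
  exact coreSet_subset Q (hc _ (h𝒮fin.mem_toFinset.mpr this))

end Core

universe u

section Ann

variable {A : Type*} [Ring A]

/-- The annihilator of a module, as a set. -/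
def annSet (A : Type*) [Ring A] (M : Type*) [AddCommGroup M] [Module A M] : Set A :=
  {x : A | ∀ v : M, x • v = 0}

variable {M : Type*} [AddCommGroup M] [Module A M]

lemma annSet_isTwoSided : IsTwoSidedIdealSet (annSet A M) := by
  refine ⟨fun v => zero_smul A v, ?_, ?_, ?_, ?_⟩
  · intro a ha b hb v; rw [add_smul, ha v, hb v, add_zero]
  · intro a ha v; rw [neg_smul, ha v, neg_zero]
  · intro a ha r v; rw [mul_smul, ha v, smul_zero]
  · intro a ha r v; rw [mul_smul, ha (r • v)]

lemma annSet_isPrime (hM : IsSimpleModule A M) : IsPrimeIdealSet (annSet A M) := by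
  refine ⟨annSet_isTwoSided, ?_, ?_⟩
  · intro h
    obtain ⟨v, w, hvw⟩ := IsSimpleModule.nontrivial A M
    have h1 : (1:A) ∈ annSet A M := h ▸ Set.mem_univ 1
    exact hvw (by rw [← one_smul A v, ← one_smul A w, h1 v, h1 w])
  · intro I J hI hJ hmul
    by_cases hJa : J ⊆ annSet A M
    · exact Or.inr hJa
    · left
      obtain ⟨b, hbJ, hbann⟩ := Set.not_subset.mp hJa
      simp only [annSet, Set.mem_setOf_eq, not_forall] at hbann
      obtain ⟨w, hbw⟩ := hbann
      intro x hxI v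
      set N : Submodule A M :=
        { carrier := {v | ∀ y ∈ I, y • v = 0}
          zero_mem' := fun y _ => smul_zero y
          add_mem' := by intro p q hp hq y hy; rw [smul_add, hp y hy, hq y hy, add_zero]
          smul_mem' := by
            intro r v hv y hy
            rw [← mul_smul]
            exact hv (y * r) (hI.mul_right hy r) } with hN
      have hbwN : b • w ∈ N := by
        intro y hy
        rw [← mul_smul]
        exact hmul y hy b hbJ w
      have hNtop : N = ⊤ := by
        rcases eq_bot_or_eq_top N with h | h
        · exfalso; apply hbw; rw [h] at hbwN; simpa using hbwN
        · exact h
      have : v ∈ N := hNtop ▸ Submodule.mem_top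
      exact this x hxI

end Ann

section Levitzki

variable {A : Type u} [Ring A]

/-- Right annihilator of `u` modulo `P`, as a left ideal of `Aᵐᵒᵖ`. -/
def rOp (hP : IsTwoSidedIdealSet (P : Set A)) (u : A) : Submodule Aᵐᵒᵖ Aᵐᵒᵖ where
  carrier := {y : Aᵐᵒᵖ | u * y.unop ∈ P}
  add_mem' := by
    intro y z hy hz
    simp only [Set.mem_setOf_eq, MulOpposite.unop_add, mul_add] at *
    exact hP.add_mem hy hz
  zero_mem' := by simp only [Set.mem_setOf_eq, MulOpposite.unop_zero, mul_zero]; exact hP.zero_mem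
  smul_mem' := by
    intro z y hy
    simp only [Set.mem_setOf_eq, smul_eq_mul, MulOpposite.unop_mul, ← mul_assoc] at *
    exact hP.mul_right hy _

lemma mem_rOp_iff {P : Set A} (hP : IsTwoSidedIdealSet P) (u : A) (y : Aᵐᵒᵖ) :
    y ∈ rOp hP u ↔ u * y.unop ∈ P := Iff.rfl

/-- Levitzki-type lemma: a two-sided ideal, all of whose elements are nilpotent
modulo the prime `P`, is contained in `P` (given the right noetherian condition). -/
lemma nil_ideal_subset {P Jset : Set A} [IsNoetherianRing Aᵐᵒᵖ]
    (hP : IsPrimeIdealSet P) (hJ : IsTwoSidedIdealSet Jset)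
    (hnil : ∀ v ∈ Jset, ∃ n : ℕ, 1 ≤ n ∧ v ^ n ∈ P) : Jset ⊆ P := by
  classical
  by_contra hsub
  obtain ⟨c, hcJ, hcP⟩ := Set.not_subset.mp hsub
  set F : Set (Submodule Aᵐᵒᵖ Aᵐᵒᵖ) := (fun u => rOp hP.1 u) '' (Jset \ P) with hF
  have hFne : F.Nonempty := ⟨rOp hP.1 c, ⟨c, ⟨hcJ, hcP⟩, rfl⟩⟩
  have hwf : WellFounded ((· > ·) : Submodule Aᵐᵒᵖ Aᵐᵒᵖ → _ → Prop) :=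
    (IsNoetherian.wellFoundedGT (inferInstance : IsNoetherian Aᵐᵒᵖ Aᵐᵒᵖ)).wf
  obtain ⟨Nu, hNuF, hmax⟩ := hwf.has_min F hFne
  obtain ⟨u, ⟨huJ, huP⟩, rfl⟩ := hNuF
  have key : ∀ x : A, u * x * u ∈ P := by
    intro x
    by_cases hxu : x * u ∈ P
    · rw [mul_assoc]; exact hP.1.mul_left hxu u
    · have hxuJ : x * u ∈ Jset := hJ.mul_left huJ x
      have hex : ∃ n : ℕ, 1 ≤ n ∧ (x*u) ^ n ∈ P := hnil _ hxuJ
      have hfs := Nat.find_spec hex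
      have hk2 : 2 ≤ Nat.find hex := by
        rcases Nat.lt_or_ge (Nat.find hex) 2 with h | h
        · exfalso
          have h1 := hfs.1
          have h2 := hfs.2
          have he : Nat.find hex = 1 := by omega
          rw [he, pow_one] at h2
          exact hxu h2
        · exact h
      obtain ⟨j, hj⟩ : ∃ j, Nat.find hex = j + 2 := ⟨Nat.find hex - 2, by omega⟩
      have hkP : (x*u) ^ (j+2) ∈ P := by rw [← hj]; exact hfs.2
      set w := (x*u) ^ (j+1) with hw
      have hwP : w ∉ P := by
        intro hwP
        have := Nat.find_min hex (m := j+1) (by omega)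
        exact this ⟨by omega, hwP⟩
      have hwJ : w ∈ Jset := by
        rw [hw, pow_succ]
        exact hJ.mul_left hxuJ _
      have hle : rOp hP.1 u ≤ rOp hP.1 w := by
        intro y hy
        rw [mem_rOp_iff] at *
        have : w * y.unop = (x*u)^j * (x * (u * y.unop)) := by
          rw [hw, pow_succ]; simp [mul_assoc]
        rw [this]
        exact hP.1.mul_left (hP.1.mul_left hy x) _
      have heq : rOp hP.1 w = rOp hP.1 u := by
        by_contra hne
        exact hmax _ ⟨w, ⟨hwJ, hwP⟩, rfl⟩ (lt_of_le_of_ne hle (Ne.symm hne))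
      have hxw : (MulOpposite.op (x*u)) ∈ rOp hP.1 w := by
        rw [mem_rOp_iff]
        simpa [hw, ← pow_succ] using hkP
      rw [heq, mem_rOp_iff] at hxw
      simpa [mul_assoc] using hxw
  rcases hP.elem key with h | h <;> exact huP h

end Levitzki

section LCPrim

variable {A : Type u} [Ring A]

lemma sInter_isTwoSided {S : Set (Set A)} (h : ∀ Q ∈ S, IsTwoSidedIdealSet Q) :
    IsTwoSidedIdealSet (⋂₀ S) := by
  refine ⟨?_, ?_, ?_, ?_, ?_⟩
  · exact fun Q hQ => (h Q hQ).zero_mem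
  · intro a ha b hb Q hQ; exact (h Q hQ).add_mem (ha Q hQ) (hb Q hQ)
  · intro a ha Q hQ; exact (h Q hQ).neg_mem (ha Q hQ)
  · intro a ha r Q hQ; exact (h Q hQ).mul_left (ha Q hQ) r
  · intro a ha r Q hQ; exact (h Q hQ).mul_right (ha Q hQ) r

/-- (ii) ⇒ (i): locally closed implies left primitive. -/
lemma lc_implies_prim [IsNoetherianRing Aᵐᵒᵖ]
    (hnull₁ : ∀ I : TwoSidedIdeal A, ∀ x : I.ringCon.Quotient,
        (∀ m : Ideal I.ringCon.Quotient, m.IsMaximal → x ∈ m) → IsNilpotent x)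
    {P : Set A} (hP : IsPrimeIdealSet P) (hlc : IsLocallyClosedPrime P) :
    IsLeftPrimitiveSet P := by
  classical
  by_contra hnp
  set I : TwoSidedIdeal A := TwoSidedIdeal.mk' P hP.1.zero_mem
    (fun hx hy => hP.1.add_mem hx hy) (fun hx => hP.1.neg_mem hx)
    (fun hy => hP.1.mul_left hy _) (fun hx => hP.1.mul_right hx _) with hIdef
  have hmemI : ∀ x : A, x ∈ I ↔ x ∈ P := fun x => TwoSidedIdeal.mem_mk' _ _ _ _ _ _ x
  set R := I.ringCon.Quotient with hRdef
  set π : A →+* R := I.ringCon.mk' with hπdef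
  have hπ0 : ∀ x : A, π x = 0 ↔ x ∈ P := by
    intro x
    have h0 : (0 : R) = π 0 := (map_zero π).symm
    rw [h0]
    show (x : I.ringCon.Quotient) = ((0:A) : I.ringCon.Quotient) ↔ x ∈ P
    rw [RingCon.eq, ← TwoSidedIdeal.mem_iff, hmemI]
  have hπsurj : Function.Surjective π := Quotient.exists_rep
  haveI hRnt : Nontrivial R := by
    refine ⟨⟨1, 0, fun h => ?_⟩⟩
    have : π 1 = 0 := by rw [map_one]; exact h
    exact hP.one_not_mem ((hπ0 1).mp this)
  set Jset := ⋂₀ {Q : Set A | IsPrimeIdealSet Q ∧ P ⊂ Q} with hJdef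
  have hJm : ∀ m : Ideal R, m.IsMaximal → ∀ v ∈ Jset, π v ∈ m := by
    intro m hm v hv
    letI instAM : Module A (R ⧸ m) := Module.compHom _ π
    haveI hsimpleR : IsSimpleModule R (R ⧸ m) := isSimpleModule_iff_isCoatom.mpr hm.out
    haveI : Nontrivial (R ⧸ m) := IsSimpleModule.nontrivial R (R ⧸ m)
    have hAR : ∀ (x : A) (w : R ⧸ m), x • w = π x • w := fun x w => rfl
    have hsimpleA : IsSimpleModule A (R ⧸ m) := by
      haveI : Nontrivial (Submodule A (R ⧸ m)) := Submodule.nontrivial_iff A |>.mpr inferInstance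
      refine (isSimpleModule_iff A (R ⧸ m)).mpr ⟨fun N => ?_⟩
      set N' : Submodule R (R ⧸ m) :=
        { carrier := (N : Set (R ⧸ m))
          zero_mem' := N.zero_mem
          add_mem' := fun ha hb => N.add_mem ha hb
          smul_mem' := by
            intro r v hv
            obtain ⟨x, rfl⟩ := hπsurj r
            rw [← hAR]
            exact N.smul_mem x hv } with hN'
      have hcar : ∀ v : R ⧸ m, v ∈ N ↔ v ∈ N' := fun v => Iff.rfl
      rcases eq_bot_or_eq_top N' with h | h
      · left; ext v; rw [Submodule.mem_bot]
        rw [hcar, h, Submodule.mem_bot]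
      · right; ext v; simp only [Submodule.mem_top, iff_true]
        have : v ∈ N' := h ▸ Submodule.mem_top
        rwa [← hcar] at this
    have hPsub : P ⊆ annSet A (R ⧸ m) := by
      intro x hx w
      change π x • w = 0
      rw [(hπ0 x).mpr hx, zero_smul]
    have hannP : annSet A (R ⧸ m) ≠ P :=
      fun h => hnp ⟨R ⧸ m, inferInstance, instAM, hsimpleA, h.symm⟩
    have hprime := annSet_isPrime (A := A) (M := R ⧸ m) hsimpleA
    have hvann : v ∈ annSet A (R ⧸ m) :=
      hv _ ⟨hprime, HasSubset.Subset.ssubset_of_ne hPsub (Ne.symm hannP)⟩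
    have h1 : v • (Submodule.Quotient.mk (1:R) : R ⧸ m) = 0 := hvann _
    rw [hAR, ← Submodule.Quotient.mk_smul, smul_eq_mul, mul_one,
      Submodule.Quotient.mk_eq_zero] at h1
    exact h1
  have hnilJ : ∀ v ∈ Jset, ∃ n : ℕ, 1 ≤ n ∧ v ^ n ∈ P := by
    intro v hv
    obtain ⟨n, hn⟩ := hnull₁ I (π v) (fun m hm => hJm m hm v hv)
    have hπn : π (v ^ n) = 0 := by rw [map_pow]; exact hn
    rcases Nat.eq_zero_or_pos n with rfl | hpos
    · exfalso
      rw [pow_zero] at hn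
      exact one_ne_zero hn
    · exact ⟨n, hpos, (hπ0 _).mp hπn⟩
  have hJts : IsTwoSidedIdealSet Jset := sInter_isTwoSided (fun Q hQ => hQ.1.1)
  exact hlc.2 (nil_ideal_subset hP hJts hnilJ)

end LCPrim

section Words

variable {A : Type*} [Ring A]

/-- All-`a` word `u * a * y 1 * a * y 2 * ⋯ * a * y n`. -/
def aw (a u : A) (y : ℕ → A) : ℕ → A
  | 0 => u
  | n+1 => aw a u y n * a * y (n+1)

/-- Word with `n` letters, the last `j` of which are `b` and the rest `a`. -/
def Wrd (a b u : A) (y : ℕ → A) : ℕ → ℕ → A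
  | n, 0 => aw a u y n
  | 0, _+1 => 0
  | n+1, j+1 => Wrd a b u y n j * b * y (n+1)

lemma aw_zero (a u : A) (y : ℕ → A) : aw a u y 0 = u := rfl
lemma aw_succ (a u : A) (y : ℕ → A) (n : ℕ) :
    aw a u y (n+1) = aw a u y n * a * y (n+1) := rfl
lemma Wrd_j0 (a b u : A) (y : ℕ → A) (n : ℕ) : Wrd a b u y n 0 = aw a u y n := by
  cases n <;> rfl
lemma Wrd_succ (a b u : A) (y : ℕ → A) (n j : ℕ) :
    Wrd a b u y (n+1) (j+1) = Wrd a b u y n j * b * y (n+1) := rfl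

variable {P : Set A} (hP : IsTwoSidedIdealSet P)

/-- The congruence modulo the ideal-set `P`. -/
def MP (P : Set A) (x y : A) : Prop := x - y ∈ P

lemma MP.refl {x : A} (hP : IsTwoSidedIdealSet P) : MP P x x := by
  simp only [MP, sub_self]; exact hP.zero_mem

lemma MP.trans {x y z : A} (hP : IsTwoSidedIdealSet P) (h1 : MP P x y) (h2 : MP P y z) :
    MP P x z := by
  have := hP.add_mem h1 h2
  simpa [MP] using this

lemma MP.mul_right {x y : A} (hP : IsTwoSidedIdealSet P) (h : MP P x y) (c : A) :
    MP P (x * c) (y * c) := by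
  have := hP.mul_right h c
  simpa [MP, sub_mul] using this

lemma MP.mul_left {x y : A} (hP : IsTwoSidedIdealSet P) (h : MP P x y) (c : A) :
    MP P (c * x) (c * y) := by
  have := hP.mul_left h c
  simpa [MP, mul_sub] using this

lemma MP.add {x₁ y₁ x₂ y₂ : A} (hP : IsTwoSidedIdealSet P) (h1 : MP P x₁ y₁)
    (h2 : MP P x₂ y₂) : MP P (x₁ + x₂) (y₁ + y₂) := by
  have := hP.add_mem h1 h2
  simpa [MP, sub_add_sub_comm] using this

lemma MP.sum {ι : Type*} (hP : IsTwoSidedIdealSet P) (s : Finset ι) (f g : ι → A)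
    (h : ∀ i ∈ s, MP P (f i) (g i)) : MP P (∑ i ∈ s, f i) (∑ i ∈ s, g i) := by
  simp only [MP, ← Finset.sum_sub_distrib]
  exact hP.sum_mem s _ (fun i hi => h i hi)

lemma MP.mem_right {x y : A} (hP : IsTwoSidedIdealSet P) (h : MP P x y) (hy : y ∈ P) :
    x ∈ P := by
  have := hP.add_mem h hy
  simpa [MP] using this

lemma MP.mem_trans {Q : Set A} {x y : A} (hPQ : P ⊆ Q) (hQ : IsTwoSidedIdealSet Q)
    (h : MP P x y) (hy : y ∈ Q) : x ∈ Q := by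
  have := hQ.add_mem (hPQ h) hy
  simpa [MP] using this

variable {a b : A}

lemma aw_agree {u : A} {y₁ y₂ : ℕ → A} (n : ℕ) (h : ∀ i, 1 ≤ i → i ≤ n → y₁ i = y₂ i) :
    aw a u y₁ n = aw a u y₂ n := by
  induction n with
  | zero => rfl
  | succ n ih =>
      show aw a u y₁ n * a * y₁ (n+1) = aw a u y₂ n * a * y₂ (n+1)
      rw [ih (fun i h1 h2 => h i h1 (by omega)), h (n+1) (by omega) (by omega)]

lemma Wrd_agree {u : A} {y₁ y₂ : ℕ → A} (n j : ℕ) (h : ∀ i, 1 ≤ i → i ≤ n → y₁ i = y₂ i) :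
    Wrd a b u y₁ n j = Wrd a b u y₂ n j := by
  induction n generalizing j with
  | zero =>
      cases j with
      | zero => rfl
      | succ j => rfl
  | succ n ih =>
      cases j with
      | zero => exact aw_agree (n+1) h
      | succ j =>
          show Wrd a b u y₁ n j * b * y₁ (n+1) = Wrd a b u y₂ n j * b * y₂ (n+1)
          rw [ih j (fun i h1 h2 => h i h1 (by omega)), h (n+1) (by omega) (by omega)]

lemma aw_left (u r : A) (y : ℕ → A) (n : ℕ) : aw a (r * u) y n = r * aw a u y n := by
  induction n with
  | zero => rfl
  | succ n ih =>
      show aw a (r*u) y n * a * y (n+1) = r * (aw a u y n * a * y (n+1))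
      rw [ih]; simp [mul_assoc]

lemma Wrd_left (u r : A) (y : ℕ → A) (n j : ℕ) :
    Wrd a b (r * u) y n j = r * Wrd a b u y n j := by
  induction n generalizing j with
  | zero =>
      cases j with
      | zero => exact aw_left u r y 0
      | succ j => show (0:A) = r * 0; rw [mul_zero]
  | succ n ih =>
      cases j with
      | zero => exact aw_left u r y (n+1)
      | succ j =>
          show Wrd a b (r*u) y n j * b * y (n+1) = r * (Wrd a b u y n j * b * y (n+1))
          rw [ih]; simp [mul_assoc]

lemma aw_update (u x : A) (y : ℕ → A) (n : ℕ) (hn : 1 ≤ n) :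
    aw a u (Function.update y n (y n * x)) n = aw a u y n * x := by
  obtain ⟨m, rfl⟩ : ∃ m, n = m + 1 := ⟨n - 1, by omega⟩
  show aw a u (Function.update y (m+1) (y (m+1) * x)) m * a *
      (Function.update y (m+1) (y (m+1) * x)) (m+1) = aw a u y (m+1) * x
  rw [aw_agree m (fun i h1 h2 => Function.update_of_ne (by omega) _ y),
    Function.update_self]
  show aw a u y m * a * (y (m+1) * x) = aw a u y m * a * y (m+1) * x
  simp [mul_assoc]

lemma Wrd_update (u x : A) (y : ℕ → A) (n j : ℕ) (hn : 1 ≤ n) :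
    Wrd a b u (Function.update y n (y n * x)) n j = Wrd a b u y n j * x := by
  obtain ⟨m, rfl⟩ : ∃ m, n = m + 1 := ⟨n - 1, by omega⟩
  cases j with
  | zero => exact aw_update u x y (m+1) hn
  | succ j =>
      show Wrd a b u (Function.update y (m+1) (y (m+1) * x)) m j * b *
          (Function.update y (m+1) (y (m+1) * x)) (m+1) = Wrd a b u y (m+1) (j+1) * x
      rw [Wrd_agree m j (fun i h1 h2 => Function.update_of_ne (by omega) _ y),
        Function.update_self]
      show Wrd a b u y m j * b * (y (m+1) * x) = Wrd a b u y m j * b * y (m+1) * x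
      simp [mul_assoc]

/-- Tail-factorization: `Wrd (m+i) (j+i) = Wrd m j * T` for a fixed tail `T`. -/
lemma Wrd_tail (u : A) (y : ℕ → A) (i m : ℕ) :
    ∃ T : A, ∀ j, j ≤ m → Wrd a b u y (m+i) (j+i) = Wrd a b u y m j * T := by
  induction i with
  | zero => exact ⟨1, fun j _ => (mul_one _).symm⟩
  | succ i ih =>
      obtain ⟨T, hT⟩ := ih
      refine ⟨T * b * y (m+i+1), fun j hj => ?_⟩
      show Wrd a b u y (m+i) (j+i) * b * y (m+i+1) = Wrd a b u y m j * (T * b * y (m+i+1))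
      rw [hT j hj]; simp [mul_assoc]

/-- Swap-bubble: modulo `P`, a trailing `a` can be pushed past the `b`s. -/
lemma Wrd_swap (hP : IsTwoSidedIdealSet P)
    (hrel : ∀ x : A, a * x * b - b * x * a ∈ P) (u : A) (y : ℕ → A) :
    ∀ j n, j ≤ n → MP P (Wrd a b u y (n+1) j) (Wrd a b u y n j * a * y (n+1)) := by
  intro j
  induction j with
  | zero =>
      intro n _
      rw [Wrd_j0, Wrd_j0, aw_succ]
      exact MP.refl hP
  | succ j ih =>
      intro n hj
      obtain ⟨n', rfl⟩ : ∃ n', n = n' + 1 := ⟨n - 1, by omega⟩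
      rw [Wrd_succ, Wrd_succ]
      have h1 : MP P (Wrd a b u y (n'+1) j * b * y (n'+2))
          ((Wrd a b u y n' j * a * y (n'+1)) * b * y (n'+2)) :=
        MP.mul_right hP (MP.mul_right hP (ih n' (by omega)) b) _
      have h2 : MP P ((Wrd a b u y n' j * a * y (n'+1)) * b * y (n'+2))
          ((Wrd a b u y n' j * b * y (n'+1)) * a * y (n'+2)) := by
        show _ - _ ∈ P
        have : Wrd a b u y n' j * a * y (n'+1) * b * y (n'+2) -
            Wrd a b u y n' j * b * y (n'+1) * a * y (n'+2) =
            Wrd a b u y n' j * ((a * y (n'+1) * b - b * y (n'+1) * a) * y (n'+2)) := by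
          simp [mul_assoc, mul_sub, sub_mul]
        rw [this]
        exact hP.mul_left (hP.mul_right (hrel (y (n'+1))) _) _
      exact MP.trans hP h1 h2

end Words

section PolyWords

open Polynomial

variable {k : Type*} [Field k] {A : Type*} [Ring A] [Algebra k A]

/-- The word-sum `∑ⱼ (coeff p j) · W_{n,j}`. -/
def Sm (a b u : A) (y : ℕ → A) (p : Polynomial k) (n : ℕ) : A :=
  ∑ j ∈ Finset.range (n+1), algebraMap k A (p.coeff j) * Wrd a b u y n j

/-- `p(λ) ≡ 0`: all word-sums of `p` lie in `P`. -/
def VP (P : Set A) (a b : A) (p : Polynomial k) : Prop :=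
  ∀ (u : A) (y : ℕ → A) (n : ℕ), p.natDegree < n → Sm a b u y p n ∈ P

variable {a b : A} {P : Set A}

lemma MP.mem_left (hP : IsTwoSidedIdealSet P) {x y : A} (h : MP P x y) (hx : x ∈ P) :
    y ∈ P := by
  have := hP.sub_mem hx h
  simpa [MP] using this

lemma Sm_add (u : A) (y : ℕ → A) (p₁ p₂ : Polynomial k) (n : ℕ) :
    Sm a b u y (p₁ + p₂) n = Sm a b u y p₁ n + Sm a b u y p₂ n := by
  simp [Sm, coeff_add, map_add, add_mul, Finset.sum_add_distrib]

lemma Sm_zero (u : A) (y : ℕ → A) (n : ℕ) : Sm a b u y (0 : Polynomial k) n = 0 := by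
  simp [Sm]

lemma Sm_one (u : A) (y : ℕ → A) (n : ℕ) : Sm a b u y (1 : Polynomial k) n = aw a u y n := by
  rw [Sm, Finset.sum_eq_single 0]
  · simp [Wrd_j0]
  · intro j _ hj
    simp [coeff_one, hj]
  · intro h
    exact absurd (Finset.mem_range.mpr (by omega)) h

lemma Sm_smul (u : A) (y : ℕ → A) (c : k) (p : Polynomial k) (n : ℕ) :
    Sm a b u y (Polynomial.C c * p) n = algebraMap k A c * Sm a b u y p n := by
  simp only [Sm, coeff_C_mul, map_mul, Finset.mul_sum, mul_assoc]

lemma Sm_update (u x : A) (y : ℕ → A) (p : Polynomial k) (n : ℕ) (hn : 1 ≤ n) :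
    Sm a b u (Function.update y n (y n * x)) p n = Sm a b u y p n * x := by
  rw [Sm, Sm, Finset.sum_mul]
  refine Finset.sum_congr rfl fun j _ => ?_
  rw [Wrd_update u x y n j hn, mul_assoc]

lemma Sm_agree (u : A) {y₁ y₂ : ℕ → A} (p : Polynomial k) (n : ℕ)
    (h : ∀ i, 1 ≤ i → i ≤ n → y₁ i = y₂ i) :
    Sm a b u y₁ p n = Sm a b u y₂ p n := by
  refine Finset.sum_congr rfl fun j _ => ?_
  rw [Wrd_agree n j h]

/-- Multiplying by `X^i` and a constant preserves `VP`. -/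
lemma VP_mul_X_pow_C (hP : IsTwoSidedIdealSet P) (hVP : VP P a b p) (c : k) (i : ℕ)
    {u : A} {y : ℕ → A} {n : ℕ} (hn : i + p.natDegree < n) :
    Sm a b u y (p * X ^ i * Polynomial.C c) n ∈ P := by
  obtain ⟨m, rfl⟩ : ∃ m, n = m + i := ⟨n - i, by omega⟩
  obtain ⟨T, hT⟩ := Wrd_tail (a := a) (b := b) u y i m
  have hcoeff : ∀ j, (p * X ^ i * Polynomial.C c).coeff j
      = (if i ≤ j then p.coeff (j - i) else 0) * c := by
    intro j
    rw [coeff_mul_C, coeff_mul_X_pow']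
  set f : ℕ → A := fun j =>
    algebraMap k A ((p * X ^ i * Polynomial.C c).coeff j) * Wrd a b u y (m+i) j with hf
  have himg : Finset.image (· + i) (Finset.range (m+1)) ⊆ Finset.range (m+i+1) := by
    intro j hj
    simp only [Finset.mem_image, Finset.mem_range] at hj ⊢
    obtain ⟨j', hj', rfl⟩ := hj
    omega
  have hzero : ∀ j ∈ Finset.range (m+i+1), j ∉ Finset.image (· + i) (Finset.range (m+1)) →
      f j = 0 := by
    intro j hj hnot
    simp only [Finset.mem_image, Finset.mem_range] at hj hnot
    have hji : j < i := by
      by_contra hge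
      push_neg at hge
      exact hnot ⟨j - i, by omega, by omega⟩
    rw [hf]
    simp only
    rw [hcoeff, if_neg (by omega), zero_mul, map_zero, zero_mul]
  have hsum : Sm a b u y (p * X ^ i * Polynomial.C c) (m+i)
      = ∑ j' ∈ Finset.range (m+1), f (j' + i) := by
    rw [Sm, ← Finset.sum_subset himg hzero,
      Finset.sum_image (fun x _ y _ h => by omega)]
  rw [hsum]
  have hterm : ∀ j' ∈ Finset.range (m+1),
      f (j' + i)
      = (algebraMap k A (p.coeff j') * Wrd a b u y m j') * (algebraMap k A c * T) := by
    intro j' hj'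
    rw [Finset.mem_range] at hj'
    rw [hf]
    simp only
    rw [hcoeff, if_pos (by omega), Nat.add_sub_cancel, hT j' (by omega), map_mul]
    have hc : algebraMap k A c * Wrd a b u y m j' = Wrd a b u y m j' * algebraMap k A c :=
      Algebra.commutes c _
    calc algebraMap k A (p.coeff j') * algebraMap k A c * (Wrd a b u y m j' * T)
        = algebraMap k A (p.coeff j') * (algebraMap k A c * Wrd a b u y m j') * T := by
          simp [mul_assoc]
      _ = algebraMap k A (p.coeff j') * (Wrd a b u y m j' * algebraMap k A c) * T := by rw [hc]
      _ = algebraMap k A (p.coeff j') * Wrd a b u y m j' * (algebraMap k A c * T) := by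
          simp [mul_assoc]
  rw [Finset.sum_congr rfl hterm, ← Finset.sum_mul]
  exact hP.mul_right (hVP u y m (by omega)) _

lemma VP_zero (hP : IsTwoSidedIdealSet P) : VP P a b (0 : Polynomial k) :=
  fun u y n _ => by rw [Sm_zero]; exact hP.zero_mem

/-- `VP` is stable under multiplication by arbitrary polynomials. -/
lemma VP_mul (hP : IsTwoSidedIdealSet P) {p : Polynomial k} (hVP : VP P a b p)
    (h : Polynomial k) : VP P a b (h * p) := by
  rcases eq_or_ne h 0 with rfl | hh
  · rw [zero_mul]; exact VP_zero hP
  rcases eq_or_ne p 0 with rfl | hp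
  · rw [mul_zero]; exact VP_zero hP
  intro u y n hn
  rw [natDegree_mul hh hp] at hn
  have hdecomp : h * p = ∑ i ∈ Finset.range (h.natDegree + 1),
      p * X ^ i * Polynomial.C (h.coeff i) := by
    conv_lhs => rw [h.as_sum_range]
    rw [Finset.sum_mul]
    refine Finset.sum_congr rfl fun i _ => ?_
    rw [← C_mul_X_pow_eq_monomial]
    ring
  rw [hdecomp]
  have hSm : Sm a b u y (∑ i ∈ Finset.range (h.natDegree + 1),
      p * X ^ i * Polynomial.C (h.coeff i)) n
      = ∑ i ∈ Finset.range (h.natDegree + 1),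
          Sm a b u y (p * X ^ i * Polynomial.C (h.coeff i)) n := by
    classical
    induction (Finset.range (h.natDegree + 1)) using Finset.induction_on with
    | empty => simp [Sm_zero]
    | insert _ _ hnotmem =>
        rename_i i s ih
        rw [Finset.sum_insert hnotmem, Finset.sum_insert hnotmem, Sm_add, ih]
  rw [hSm]
  refine hP.sum_mem _ _ fun i hi => ?_
  rw [Finset.mem_range] at hi
  exact VP_mul_X_pow_C hP hVP _ i (by omega)

/-- The key congruence: `Sm ((X+1)p) (n+1) ≡ Sm p n * ((a+b) * y (n+1))  (mod P)`. -/
lemma Sm_X_add_one (hP : IsTwoSidedIdealSet P)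
    (hrel : ∀ x : A, a * x * b - b * x * a ∈ P)
    (u : A) (y : ℕ → A) (p : Polynomial k) (n : ℕ) (hdeg : p.natDegree < n + 1) :
    MP P (Sm a b u y ((X + 1) * p) (n+1)) (Sm a b u y p n * ((a + b) * y (n+1))) := by
  have hXp : (X + 1) * p = X * p + p := by ring
  rw [hXp, Sm_add]
  have hA : Sm a b u y (X * p) (n+1)
      = ∑ j ∈ Finset.range (n+1), algebraMap k A (p.coeff j) * (Wrd a b u y n j * b * y (n+1)) := by
    rw [Sm, Finset.sum_range_succ']
    have h0 : (X * p).coeff 0 = 0 := by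
      rw [mul_comm, coeff_mul_X_zero]
    rw [h0, map_zero, zero_mul, add_zero]
    refine Finset.sum_congr rfl fun j _ => ?_
    rw [coeff_X_mul, Wrd_succ]
  have hB : MP P (Sm a b u y p (n+1))
      (∑ j ∈ Finset.range (n+1), algebraMap k A (p.coeff j) * (Wrd a b u y n j * a * y (n+1))) := by
    rw [Sm, Finset.sum_range_succ, coeff_eq_zero_of_natDegree_lt hdeg, map_zero, zero_mul,
      add_zero]
    exact MP.sum hP _ _ _ fun j hj =>
      MP.mul_left hP (Wrd_swap hP hrel u y j n (by
        rw [Finset.mem_range] at hj; omega)) _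
  have htot : MP P (Sm a b u y (X * p) (n+1) + Sm a b u y p (n+1))
      (∑ j ∈ Finset.range (n+1), algebraMap k A (p.coeff j) * (Wrd a b u y n j * b * y (n+1))
       + ∑ j ∈ Finset.range (n+1), algebraMap k A (p.coeff j) * (Wrd a b u y n j * a * y (n+1))) := by
    rw [hA]
    exact MP.add hP (MP.refl hP) hB
  refine MP.trans hP htot ?_
  have : ∑ j ∈ Finset.range (n+1), algebraMap k A (p.coeff j) * (Wrd a b u y n j * b * y (n+1))
       + ∑ j ∈ Finset.range (n+1), algebraMap k A (p.coeff j) * (Wrd a b u y n j * a * y (n+1))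
       = Sm a b u y p n * ((a + b) * y (n+1)) := by
    rw [Sm, Finset.sum_mul, ← Finset.sum_add_distrib]
    refine Finset.sum_congr rfl fun j _ => ?_
    simp only [mul_assoc, ← mul_add]
    congr 1
    congr 1
    rw [← add_mul, add_comm b a]
  rw [this]
  exact MP.refl hP

/-- Dividing by `X + 1` preserves `VP` (uses primality of `P` and `a + b ∉ P`). -/
lemma VP_of_VP_X_add_one (hP : IsPrimeIdealSet P)
    (hrel : ∀ x : A, a * x * b - b * x * a ∈ P) (hab : a + b ∉ P)
    {p : Polynomial k} (hV : VP P a b ((X + 1) * p)) : VP P a b p := by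
  rcases eq_or_ne p 0 with rfl | hp
  · exact VP_zero hP.1
  intro u y n hn
  have hd1 : (X + 1 : Polynomial k).natDegree = 1 := by
    simpa using natDegree_X_add_C (1 : k)
  have hX1 : (X + 1 : Polynomial k) ≠ 0 := by
    intro h
    rw [h] at hd1
    simp at hd1
  have hdegX : ((X + 1) * p).natDegree = 1 + p.natDegree := by
    rw [natDegree_mul hX1 hp, hd1]
  have key : ∀ x : A, Sm a b u y p n * x * (a + b) ∈ P := by
    intro x
    set y₁ := Function.update y n (y n * x) with hy₁
    set y₂ := Function.update y₁ (n+1) 1 with hy₂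
    have hmem := hV u y₂ (n+1) (by omega)
    have hcong := Sm_X_add_one hP.1 hrel u y₂ p n (by omega)
    have h1 : Sm a b u y₂ p n * ((a + b) * y₂ (n+1)) ∈ P := MP.mem_left hP.1 hcong hmem
    have h2 : y₂ (n+1) = 1 := Function.update_self _ _ _
    have h3 : Sm a b u y₂ p n = Sm a b u y p n * x := by
      have hagree : Sm a b u y₂ p n = Sm a b u y₁ p n :=
        Sm_agree u p n (fun i hi1 hi2 => Function.update_of_ne (by omega) _ y₁)
      rw [hagree, hy₁, Sm_update u x y p n (by omega)]
    rw [h2, mul_one, h3] at h1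
    exact h1
  rcases hP.elem key with h | h
  · exact h
  · exact absurd h hab

/-- On the `Q`-side: `Sm (e (X+1)) n ∈ Q` whenever `a + b ∈ Q ⊇ P`. -/
lemma Sm_mul_X_add_one_mem (hP : IsTwoSidedIdealSet P) {Q : Set A}
    (hQ : IsTwoSidedIdealSet Q) (hPQ : P ⊆ Q)
    (hrel : ∀ x : A, a * x * b - b * x * a ∈ P) (hab : a + b ∈ Q)
    (u : A) (y : ℕ → A) (e : Polynomial k) (n : ℕ) (hdeg : e.natDegree < n) :
    Sm a b u y (e * (X + 1)) n ∈ Q := by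
  obtain ⟨n', rfl⟩ : ∃ n', n = n' + 1 := ⟨n - 1, by omega⟩
  have hcong := Sm_X_add_one hP hrel u y e n' (by omega)
  rw [mul_comm e (X + 1 : Polynomial k)]
  refine MP.mem_trans hPQ hQ hcong ?_
  exact hQ.mul_left (hQ.mul_right hab _) _

end PolyWords

section Phi

variable {A : Type u} [Ring A] {M : Type u} [AddCommGroup M] [Module A M]

/-- Generic tail word builder. -/
def gtl {A : Type*} [Ring A] : A → List (A × A) → A
  | w, [] => w
  | w, (c, z) :: t => gtl (w * c * z) t

lemma gtl_cons {A : Type*} [Ring A] (w c z : A) (t : List (A × A)) :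
    gtl w ((c, z) :: t) = gtl (w * c * z) t := rfl

/-- The graph submodule defining `φ`. -/
def graphSub (a b : A) (M : Type u) [AddCommGroup M] [Module A M] : Submodule A (M × M) :=
  Submodule.span A {pr : M × M | ∃ (x : A) (mm : M), pr = ((x * a) • mm, (x * b) • mm)}

lemma graphSub_prop {P : Set A} (hann : P = {x : A | ∀ m : M, x • m = 0}) {a b : A}
    (hrel : ∀ x : A, a * x * b - b * x * a ∈ P) :
    ∀ pr ∈ graphSub a b M, ∀ z : A, (a * z) • pr.2 = (b * z) • pr.1 := by
  intro pr hpr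
  induction hpr using Submodule.span_induction with
  | mem pr hpr =>
      obtain ⟨x, mm, rfl⟩ := hpr
      intro z
      show (a * z) • (x * b) • mm = (b * z) • (x * a) • mm
      rw [smul_smul, smul_smul]
      have hmem : a * (z * x) * b - b * (z * x) * a ∈ P := hrel (z * x)
      rw [hann] at hmem
      have hthis := hmem mm
      rw [sub_smul, sub_eq_zero] at hthis
      have e1 : (a * z) * (x * b) = a * (z * x) * b := by simp [mul_assoc]
      have e2 : (b * z) * (x * a) = b * (z * x) * a := by simp [mul_assoc]
      rw [e1, e2, hthis]
  | zero => intro z; simp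
  | add pr qr _ _ hp hq =>
      intro z
      show (a * z) • (pr.2 + qr.2) = (b * z) • (pr.1 + qr.1)
      rw [smul_add, smul_add, hp z, hq z]
  | smul r pr _ hp =>
      intro z
      show (a * z) • (r • pr.2) = (b * z) • (r • pr.1)
      rw [smul_smul, smul_smul, mul_assoc, mul_assoc, hp (z * r)]

/-- Construction of the partial-centroid endomorphism `φ`. -/
lemma exists_phi (hsimple : IsSimpleModule A M) {P : Set A} (hP : IsPrimeIdealSet P)
    (hann : P = {x : A | ∀ m : M, x • m = 0}) {a b : A} (haP : a ∉ P)
    (hrel : ∀ x : A, a * x * b - b * x * a ∈ P) :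
    ∃ φ : M →ₗ[A] M, ∀ (x : A) (mm : M), φ ((x * a) • mm) = (x * b) • mm := by
  classical
  have hprop := graphSub_prop (M := M) hann hrel
  -- a acts nontrivially
  have ham : ∃ m₀ : M, a • m₀ ≠ 0 := by
    by_contra h
    push_neg at h
    exact haP (by rw [hann]; exact h)
  obtain ⟨m₀, hm₀⟩ := ham
  -- uniqueness
  have huniq : ∀ w w₁ w₂ : M, (w, w₁) ∈ graphSub a b M → (w, w₂) ∈ graphSub a b M →
      w₁ = w₂ := by
    intro w w₁ w₂ h1 h2
    have hdiff : ((0 : M), w₁ - w₂) ∈ graphSub a b M := by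
      have := Submodule.sub_mem _ h1 h2
      simpa using this
    by_contra hne
    have hw : w₁ - w₂ ≠ 0 := sub_ne_zero_of_ne hne
    have hzero : ∀ z : A, (a * z) • (w₁ - w₂) = 0 := by
      intro z
      have := hprop _ hdiff z
      simpa using this
    have hspan : Submodule.span A {w₁ - w₂} = ⊤ := by
      rcases eq_bot_or_eq_top (Submodule.span A {w₁ - w₂}) with h | h
      · exfalso
        apply hw
        have : w₁ - w₂ ∈ Submodule.span A {w₁ - w₂} := Submodule.mem_span_singleton_self _
        rw [h] at this
        simpa using this
      · exact h
    apply haP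
    rw [hann]
    intro mm
    have : mm ∈ Submodule.span A {w₁ - w₂} := hspan ▸ Submodule.mem_top
    obtain ⟨r, rfl⟩ := Submodule.mem_span_singleton.mp this
    rw [smul_smul]
    exact hzero r
  -- totality
  have htot : ∀ w : M, ∃ w', (w, w') ∈ graphSub a b M := by
    have hmap : Submodule.map (LinearMap.fst A M M) (graphSub a b M) = ⊤ := by
      rcases eq_bot_or_eq_top (Submodule.map (LinearMap.fst A M M) (graphSub a b M)) with h | h
      · exfalso
        have hgen : ((1 * a) • m₀, (1 * b) • m₀) ∈ graphSub a b M :=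
          Submodule.subset_span ⟨1, m₀, rfl⟩
        have : a • m₀ ∈ Submodule.map (LinearMap.fst A M M) (graphSub a b M) :=
          ⟨((1 * a) • m₀, (1 * b) • m₀), hgen, by simp⟩
        rw [h] at this
        exact hm₀ (by simpa using this)
      · exact h
    intro w
    have : w ∈ Submodule.map (LinearMap.fst A M M) (graphSub a b M) := hmap ▸ Submodule.mem_top
    obtain ⟨pr, hpr, hpr1⟩ := this
    refine ⟨pr.2, ?_⟩
    have h2 : pr.1 = w := hpr1
    rw [← h2]
    simpa using hpr
  choose f hf using htot
  refine ⟨{ toFun := f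
            map_add' := ?_
            map_smul' := ?_ }, ?_⟩
  · intro w₁ w₂
    have h1 : (w₁ + w₂, f w₁ + f w₂) ∈ graphSub a b M := Submodule.add_mem _ (hf w₁) (hf w₂)
    exact huniq _ _ _ (hf (w₁ + w₂)) h1
  · intro r w
    have h1 : (r • w, r • f w) ∈ graphSub a b M := by
      have := Submodule.smul_mem _ r (hf w)
      simpa using this
    exact huniq _ _ _ (hf (r • w)) h1
  · intro x mm
    have h1 : ((x * a) • mm, (x * b) • mm) ∈ graphSub a b M :=
      Submodule.subset_span ⟨x, mm, rfl⟩
    exact huniq _ _ _ (hf ((x * a) • mm)) h1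

variable {a b : A}

lemma gtl_phi (φ : M →ₗ[A] M)
    (hφ : ∀ (x : A) (mm : M), φ ((x * a) • mm) = (x * b) • mm) :
    ∀ (t : List (A × A)) (w z : A) (mm : M),
      φ ((gtl (w * a * z) t) • mm) = (gtl (w * b * z) t) • mm := by
  intro t
  induction t with
  | nil =>
      intro w z mm
      show φ ((w * a * z) • mm) = (w * b * z) • mm
      rw [mul_assoc w a z, mul_assoc w b z, ← smul_smul, ← smul_smul, ← smul_smul, ← smul_smul]
      -- φ ((w • (a • (z • mm)))) : use hφ with x := w, mm := z • mm
      have := hφ w (z • mm)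
      rw [mul_smul, mul_smul] at this
      rw [← mul_smul w a _, ← mul_smul w b _]
      have h2 := hφ w (z • mm)
      rw [show (w * a) • z • mm = (w*a) • (z • mm) from rfl] at h2
      exact h2
  | cons cz t ih =>
      intro w z mm
      obtain ⟨c, zz⟩ := cz
      rw [gtl_cons, gtl_cons]
      have he1 : w * a * z * c * zz = w * a * (z * c * zz) := by simp [mul_assoc]
      have he2 : w * b * z * c * zz = w * b * (z * c * zz) := by simp [mul_assoc]
      rw [he1, he2]
      exact ih w (z * c * zz) mm

lemma pow_phi (φ : M →ₗ[A] M)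
    (hφ : ∀ (x : A) (mm : M), φ ((x * a) • mm) = (x * b) • mm) (u : A) (y : ℕ → A) :
    ∀ (j n : ℕ) (t : List (A × A)) (mm : M), j ≤ n →
      (φ ^ j) ((gtl (aw a u y n) t) • mm) = (gtl (Wrd a b u y n j) t) • mm := by
  intro j
  induction j with
  | zero =>
      intro n t mm _
      rw [pow_zero, Wrd_j0]
      rfl
  | succ j ih =>
      intro n t mm hj
      obtain ⟨n', rfl⟩ : ∃ n', n = n' + 1 := ⟨n - 1, by omega⟩
      rw [pow_succ, Module.End.mul_apply]
      have h1 : φ ((gtl (aw a u y (n'+1)) t) • mm) = (gtl (aw a u y n' * b * y (n'+1)) t) • mm := by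
        rw [aw_succ]
        exact gtl_phi φ hφ t (aw a u y n') (y (n'+1)) mm
      rw [h1, ← gtl_cons, ih n' ((b, y (n'+1)) :: t) mm (by omega), gtl_cons, ← Wrd_succ]

end Phi

section PrimMax

open Polynomial

variable {k : Type u} [Field k] {A : Type u} [Ring A] [Algebra k A]

lemma list_comm_sum {A : Type*} [Ring A] (a x : A) :
    ∀ l : List A, (l.map (fun w => a*x*w - w*x*a)).sum = a*x*l.sum - l.sum*x*a := by
  intro l
  induction l with
  | nil => simp
  | cons w t ih =>
      simp only [List.map_cons, List.sum_cons, ih]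
      noncomm_ring

/-- (i) ⇒ (iii): a left primitive prime is maximal in its stratum. -/
lemma prim_implies_max {G : Type*} [Group G] [MulSemiringAction G A] {D : Set A}
    (hDact : ∀ v ∈ D, ∀ g : G, ∃ c : k, g⁻¹ • v = c • v)
    (hDsmul : ∀ v ∈ D, ∀ c : k, c • v ∈ D)
    (hDsub3 : ∀ u ∈ D, ∀ x ∈ D, ∀ w ∈ D, u * x * w - w * x * u ∈ D)
    (hrat : Submodule.span k D = ⊤)
    (hnull₂ : ∀ (M : Type u) (_ : AddCommGroup M) (_ : Module A M) (_ : Module k M)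
        (_ : IsScalarTower k A M) (_ : SMulCommClass A k M), IsSimpleModule A M →
        ∀ φ : M →ₗ[A] M, ∃ p : Polynomial k, p ≠ 0 ∧ Polynomial.aeval φ p = 0)
    {P Q : Set A} (hP : IsPrimeIdealSet P) (hprim : IsLeftPrimitiveSet P)
    (hQ : IsPrimeIdealSet Q) (hcore : coreSet G Q = coreSet G P) (hPQ : P ⊆ Q) :
    Q = P := by
  classical
  by_contra hne
  have hQnotP : ¬ Q ⊆ P := fun h => hne (le_antisymm h hPQ)
  obtain ⟨q₀, hq₀Q, hq₀P⟩ := Set.not_subset.mp hQnotP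
  -- weight vectors in Q lie in P
  have hDQ : ∀ v ∈ D, v ∈ Q → v ∈ P := by
    intro v hvD hvQ
    have hvcore : v ∈ coreSet G Q := by
      rw [mem_coreSet_iff]
      intro g
      obtain ⟨c, hc⟩ := hDact v hvD g
      rw [hc, Algebra.smul_def]
      exact hQ.1.mul_left hvQ _
    rw [hcore] at hvcore
    exact coreSet_subset P hvcore
  -- representations by weight vectors
  have hrep : ∀ x : A, ∃ l : List A, (∀ v ∈ l, v ∈ D) ∧ l.sum = x := by
    intro x
    have hx : x ∈ Submodule.span k D := by rw [hrat]; exact Submodule.mem_top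
    induction hx using Submodule.span_induction with
    | mem x hx => exact ⟨[x], by simpa using hx, by simp⟩
    | zero => exact ⟨[], by simp, by simp⟩
    | add x y _ _ hx hy =>
        obtain ⟨l₁, h₁, rfl⟩ := hx
        obtain ⟨l₂, h₂, rfl⟩ := hy
        refine ⟨l₁ ++ l₂, ?_, by simp⟩
        intro v hv
        rcases List.mem_append.mp hv with h | h
        · exact h₁ v h
        · exact h₂ v h
    | smul c x _ hx =>
        obtain ⟨l, hl, rfl⟩ := hx
        refine ⟨l.map (fun v => c • v), ?_, (List.smul_sum).symm⟩
        intro v hv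
        obtain ⟨w, hw, rfl⟩ := List.mem_map.mp hv
        exact hDsmul w (hl w hw) c
  -- minimal length representation of an element of Q \ P
  have hex : ∃ n : ℕ, ∃ l : List A, l.length = n ∧ (∀ v ∈ l, v ∈ D) ∧
      l.sum ∈ Q ∧ l.sum ∉ P := by
    obtain ⟨l, hl, hsum⟩ := hrep q₀
    exact ⟨l.length, l, rfl, hl, hsum ▸ hq₀Q, hsum ▸ hq₀P⟩
  obtain ⟨l, hlen, hlD, hlQ, hlP⟩ := Nat.find_spec hex
  cases l with
  | nil =>
      exact hlP (by simpa using hP.1.zero_mem)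
  | cons a tl =>
  set b := tl.sum with hb
  have hsumab : (a :: tl).sum = a + b := by rw [List.sum_cons]
  have haD : a ∈ D := hlD a List.mem_cons_self
  have habQ : a + b ∈ Q := by rwa [hsumab] at hlQ
  have habP : a + b ∉ P := by rwa [hsumab] at hlP
  have htlD : ∀ v ∈ tl, v ∈ D := fun v hv => hlD v (List.mem_cons_of_mem a hv)
  have htllen : tl.length < Nat.find hex := by
    have := hlen
    simp only [List.length_cons] at this
    omega
  -- a ∉ P
  have haP : a ∉ P := by
    intro haP'
    by_cases hbP : b ∈ P
    · exact habP (hP.1.add_mem haP' hbP)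
    · have hbQ : b ∈ Q := by
        have : b = (a + b) - a := by noncomm_ring
        rw [this]
        exact hQ.1.sub_mem habQ (hPQ haP')
      exact Nat.find_min hex htllen ⟨tl, rfl, htlD, hbQ, hbP⟩
  -- a ∉ Q
  have haQ : a ∉ Q := fun h => haP (hDQ a haD h)
  -- the fundamental relation a x b ≡ b x a (mod P)
  have hrelD : ∀ x ∈ D, a * x * b - b * x * a ∈ P := by
    intro x hxD
    by_contra hEP
    have hEQ : a * x * b - b * x * a ∈ Q := by
      have h1 : a * x * b - b * x * a = a * x * (a + b) - (a + b) * x * a := by noncomm_ring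
      rw [h1]
      exact hQ.1.sub_mem (hQ.1.mul_left habQ _) (hQ.1.mul_right (hQ.1.mul_right habQ _) _)
    have hmap : (tl.map (fun w => a*x*w - w*x*a)).sum = a * x * b - b * x * a := by
      rw [list_comm_sum a x tl]
    refine Nat.find_min hex (m := tl.length) htllen
      ⟨tl.map (fun w => a*x*w - w*x*a), by rw [List.length_map], ?_, ?_, ?_⟩
    · intro v hv
      obtain ⟨w, hw, rfl⟩ := List.mem_map.mp hv
      exact hDsub3 a haD x hxD w (htlD w hw)
    · rw [hmap]; exact hEQ
    · rw [hmap]; exact hEP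
  have hrel : ∀ x : A, a * x * b - b * x * a ∈ P := by
    intro x
    have hx : x ∈ Submodule.span k D := by rw [hrat]; exact Submodule.mem_top
    induction hx using Submodule.span_induction with
    | mem x hx => exact hrelD x hx
    | zero => simpa using hP.1.zero_mem
    | add x y _ _ hx hy =>
        have he : a * (x + y) * b - b * (x + y) * a
            = (a * x * b - b * x * a) + (a * y * b - b * y * a) := by noncomm_ring
        rw [he]
        exact hP.1.add_mem hx hy
    | smul c x _ hx =>
        have he : a * (c • x) * b - b * (c • x) * a
            = algebraMap k A c * (a * x * b - b * x * a) := by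
          rw [mul_smul_comm, smul_mul_assoc, mul_smul_comm, smul_mul_assoc, ← smul_sub,
            Algebra.smul_def]
        rw [he]
        exact hP.1.mul_left hx _
  -- the simple module and φ
  obtain ⟨M, iAG, iMod, hsimple, hann⟩ := hprim
  obtain ⟨φ, hφ⟩ := exists_phi hsimple hP hann haP hrel
  -- k-module structure
  letI instK : Module k M := Module.compHom M (algebraMap k A)
  have hsmk : ∀ (c : k) (v : M), c • v = (algebraMap k A c) • v := fun _ _ => rfl
  haveI instTower : IsScalarTower k A M := ⟨fun c x m => by
    rw [Algebra.smul_def, mul_smul, hsmk]⟩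
  haveI instComm : SMulCommClass A k M := ⟨fun x c m => by
    rw [hsmk, hsmk, smul_smul, smul_smul, Algebra.commutes]⟩
  obtain ⟨p₀, hp₀ne, hp₀aev⟩ := hnull₂ M iAG iMod instK instTower instComm hsimple φ
  -- p₀ witnesses VP
  have hVP₀ : VP P a b p₀ := by
    intro u y n hdeg
    have haev := Polynomial.aeval_eq_sum_range' (p := p₀) (n := n+1) (by omega) φ
    rw [hp₀aev] at haev
    have hz : ∀ v : M, (∑ i ∈ Finset.range (n+1), p₀.coeff i • φ ^ i) v = 0 := by
      rw [← haev]
      intro v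
      rfl
    rw [hann]
    intro mm
    have h1 := hz (aw a u y n • mm)
    rw [LinearMap.sum_apply] at h1
    have h2 : ∀ i ∈ Finset.range (n+1),
        (p₀.coeff i • φ ^ i) (aw a u y n • mm)
        = (algebraMap k A (p₀.coeff i) * Wrd a b u y n i) • mm := by
      intro i hi
      rw [Finset.mem_range] at hi
      rw [LinearMap.smul_apply]
      have h3 := pow_phi φ hφ u y i n [] mm (by omega)
      have h4 : (φ ^ i) (aw a u y n • mm) = Wrd a b u y n i • mm := h3
      rw [h4, hsmk, smul_smul]
    rw [Finset.sum_congr rfl h2, ← Finset.sum_smul] at h1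
    exact h1
  -- minimal degree polynomial in VP
  have hVex : ∃ n : ℕ, ∃ p : Polynomial k, p ≠ 0 ∧ VP P a b p ∧ p.natDegree = n :=
    ⟨p₀.natDegree, p₀, hp₀ne, hVP₀, rfl⟩
  obtain ⟨phat, hphatne, hVphat, hphatdeg⟩ := Nat.find_spec hVex
  have hd1 : (X + 1 : Polynomial k).natDegree = 1 := by
    simpa using natDegree_X_add_C (1 : k)
  have hX1 : (X + 1 : Polynomial k) ≠ 0 := by
    intro h
    rw [h] at hd1
    simp at hd1
  have hnodvd : ¬ (X + 1 : Polynomial k) ∣ phat := by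
    rintro ⟨p₁, rfl⟩
    have hp₁ne : p₁ ≠ 0 := by
      intro h
      rw [h, mul_zero] at hphatne
      exact hphatne rfl
    have hVp₁ : VP P a b p₁ := VP_of_VP_X_add_one hP hrel habP hVphat
    have hdeg : ((X + 1) * p₁).natDegree = 1 + p₁.natDegree := by
      rw [natDegree_mul hX1 hp₁ne, hd1]
    refine Nat.find_min hVex (m := p₁.natDegree) ?_ ⟨p₁, hp₁ne, hVp₁, rfl⟩
    omega
  have hirr : Irreducible (X + 1 : Polynomial k) := by
    have h : (X + 1 : Polynomial k) = X - C (-1) := by simp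
    rw [h]
    exact irreducible_X_sub_C (-1)
  obtain ⟨e, f, hef⟩ : IsCoprime (X + 1 : Polynomial k) phat :=
    (hirr.coprime_iff_not_dvd).mpr hnodvd
  -- all long a-words lie in Q
  set n₀ := e.natDegree + f.natDegree + phat.natDegree + 1 with hn₀
  have hawQ : ∀ (u : A) (y : ℕ → A), aw a u y n₀ ∈ Q := by
    intro u y
    have h1 : (1 : Polynomial k) = e * (X + 1) + f * phat := hef.symm
    have h2 : aw a u y n₀ = Sm a b u y (e * (X+1)) n₀ + Sm a b u y (f * phat) n₀ := by
      rw [← Sm_add, ← h1, Sm_one]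
    rw [h2]
    refine hQ.1.add_mem ?_ ?_
    · exact Sm_mul_X_add_one_mem hP.1 hQ.1 hPQ hrel habQ u y e n₀ (by omega)
    · refine hPQ (VP_mul hP.1 hVphat f u y n₀ ?_)
      have := natDegree_mul_le (p := f) (q := phat)
      omega
  -- descent: a ∈ Q
  have hdesc : ∀ m : ℕ, (∀ (u : A) (y : ℕ → A), aw a u y m ∈ Q) → a ∈ Q := by
    intro m
    induction m with
    | zero =>
        intro h
        exact h a (fun _ => 1)
    | succ m ih =>
        intro h
        by_cases haQ' : a ∈ Q
        · exact haQ'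
        · apply ih
          intro u y
          have key : ∀ x : A, aw a u y m * x * a ∈ Q := by
            intro x
            cases m with
            | zero =>
                have h1 := h (u * x) (fun _ => 1)
                have h2 : aw a (u*x) (fun _ => (1:A)) 1 = u * x * a := by
                  rw [aw_succ, aw_zero, mul_one]
                rwa [h2] at h1
            | succ m' =>
                set y₁ := Function.update y (m'+1) (y (m'+1) * x) with hy₁
                set y₂ := Function.update y₁ (m'+2) 1 with hy₂
                have h1 := h u y₂
                have h3 : aw a u y₂ (m'+2) = aw a u y (m'+1) * x * a := by
                  rw [aw_succ]
                  have hagr : aw a u y₂ (m'+1) = aw a u y₁ (m'+1) :=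
                    aw_agree (m'+1) (fun i hi1 hi2 => Function.update_of_ne (by omega) _ y₁)
                  have hupd : aw a u y₁ (m'+1) = aw a u y (m'+1) * x := by
                    rw [hy₁]
                    exact aw_update u x y (m'+1) (by omega)
                  have hy2v : y₂ (m'+2) = 1 := Function.update_self _ _ _
                  rw [hagr, hupd, hy2v, mul_one]
                rwa [h3] at h1
          rcases hQ.elem key with hgood | hbad
          · exact hgood
          · exact absurd hbad haQ'
  exact haQ (hdesc n₀ hawQ)

end PrimMax

/-- (Goodearl–Letzter.)  Let `k` be an infinite field, `A` a left and right noetherian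
`k`-algebra satisfying the Nullstellensatz over `k`, and `H = (kˣ)^r` a torus acting
rationally on `A` by `k`-algebra automorphisms, with only finitely many `H`-prime
ideals in `A`.  Then for every prime two-sided ideal `P` of `A`, the following are
equivalent: (i) `P` is left primitive; (ii) `P` is locally closed in the prime spectrum;
(iii) `P` is maximal within its `H`-stratum `{Q prime | (Q:H) = (P:H)}`. -/
theorem dixmier_moeglin_equivalence_for_rational_torus_actions
    {k : Type u} [Field k] [Infinite k]
    {A : Type u} [Ring A] [Algebra k A] [IsNoetherianRing A] [IsNoetherianRing Aᵐᵒᵖ]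
    (r : ℕ) [MulSemiringAction (Fin r → kˣ) A] [SMulCommClass (Fin r → kˣ) k A]
    (hrat : Submodule.span k {x : A | ∃ m : Fin r → ℤ, ∀ h : Fin r → kˣ,
        h • x = (((∏ i, h i ^ m i : kˣ) : k)) • x} = ⊤)
    (hfin : {J : Set A | IsGPrimeIdealSet (Fin r → kˣ) J}.Finite)
    (hnull₁ : ∀ I : TwoSidedIdeal A, ∀ x : I.ringCon.Quotient,
        (∀ m : Ideal I.ringCon.Quotient, m.IsMaximal → x ∈ m) → IsNilpotent x)
    (hnull₂ : ∀ (M : Type u) (_ : AddCommGroup M) (_ : Module A M) (_ : Module k M)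
        (_ : IsScalarTower k A M) (_ : SMulCommClass A k M), IsSimpleModule A M →
        ∀ φ : M →ₗ[A] M, ∃ p : Polynomial k, p ≠ 0 ∧ Polynomial.aeval φ p = 0)
    (P : Set A) (hP : IsPrimeIdealSet P) :
    (IsLeftPrimitiveSet P ↔ IsLocallyClosedPrime P) ∧
    (IsLocallyClosedPrime P ↔
      (∀ Q : Set A, IsPrimeIdealSet Q →
        (⋂ g : Fin r → kˣ, g • Q) = (⋂ g : Fin r → kˣ, g • P) → P ⊆ Q → Q = P)) := by

  set D : Set A := {x : A | ∃ m : Fin r → ℤ, ∀ h : Fin r → kˣ,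
      h • x = (((∏ i, h i ^ m i : kˣ) : k)) • x} with hD
  -- D is closed under the group action up to scalars
  have hDact : ∀ v ∈ D, ∀ g : Fin r → kˣ, ∃ c : k, g⁻¹ • v = c • v := by
    rintro v ⟨m, hm⟩ g
    exact ⟨((∏ i, (g⁻¹ : Fin r → kˣ) i ^ m i : kˣ) : k), hm g⁻¹⟩
  -- D is closed under scalars
  have hDsmul : ∀ v ∈ D, ∀ c : k, c • v ∈ D := by
    rintro v ⟨m, hm⟩ c
    refine ⟨m, fun h => ?_⟩
    rw [smul_comm, hm h, smul_smul, smul_smul, mul_comm]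
  -- D is closed under the bracket products
  have hDsub3 : ∀ u ∈ D, ∀ x ∈ D, ∀ w ∈ D, u * x * w - w * x * u ∈ D := by
    rintro u ⟨m₁, hm₁⟩ x ⟨m₂, hm₂⟩ w ⟨m₃, hm₃⟩
    refine ⟨fun i => m₁ i + m₂ i + m₃ i, fun h => ?_⟩
    have hC : ((∏ i, h i ^ (m₁ i + m₂ i + m₃ i) : kˣ) : k)
        = ((∏ i, h i ^ m₁ i : kˣ) : k) * ((∏ i, h i ^ m₂ i : kˣ) : k)
          * ((∏ i, h i ^ m₃ i : kˣ) : k) := by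
      have : (∏ i, h i ^ (m₁ i + m₂ i + m₃ i) : kˣ)
          = (∏ i, h i ^ m₁ i) * (∏ i, h i ^ m₂ i) * (∏ i, h i ^ m₃ i) := by
        rw [← Finset.prod_mul_distrib, ← Finset.prod_mul_distrib]
        refine Finset.prod_congr rfl fun i _ => ?_
        rw [zpow_add, zpow_add]
      rw [this, Units.val_mul, Units.val_mul]
    have hmul3 : ∀ (p q s : A) (c₁ c₂ c₃ : k), (c₁ • p) * (c₂ • q) * (c₃ • s)
        = (c₁ * c₂ * c₃) • (p * q * s) := by
      intro p q s c₁ c₂ c₃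
      rw [smul_mul_smul_comm, smul_mul_smul_comm]
    have h1 : h • (u * x * w) = (((∏ i, h i ^ (m₁ i + m₂ i + m₃ i) : kˣ) : k)) • (u * x * w) := by
      rw [smul_mul', smul_mul', hm₁ h, hm₂ h, hm₃ h, hmul3, hC]
    have h2 : h • (w * x * u) = (((∏ i, h i ^ (m₁ i + m₂ i + m₃ i) : kˣ) : k)) • (w * x * u) := by
      rw [smul_mul', smul_mul', hm₃ h, hm₂ h, hm₁ h, hmul3, hC]
      ring_nf
    rw [smul_sub, h1, h2, smul_sub]
  have hrat' : Submodule.span k D = ⊤ := hrat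
  -- arrow (i) → (iii)
  have hprim_to_max : IsLeftPrimitiveSet P →
      (∀ Q : Set A, IsPrimeIdealSet Q →
        (⋂ g : Fin r → kˣ, g • Q) = (⋂ g : Fin r → kˣ, g • P) → P ⊆ Q → Q = P) := by
    intro hprim Q hQ hc hsub
    exact prim_implies_max hDact hDsmul hDsub3 hrat' hnull₂ hP hprim hQ hc hsub
  -- arrow (iii) → (ii)
  have hmax_to_lc : (∀ Q : Set A, IsPrimeIdealSet Q →
        (⋂ g : Fin r → kˣ, g • Q) = (⋂ g : Fin r → kˣ, g • P) → P ⊆ Q → Q = P) →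
      IsLocallyClosedPrime P := by
    intro hmax
    exact max_implies_lc hP hfin hmax
  -- arrow (ii) → (i)
  have hlc_to_prim : IsLocallyClosedPrime P → IsLeftPrimitiveSet P :=
    lc_implies_prim hnull₁ hP
  exact ⟨⟨fun hprim => hmax_to_lc (hprim_to_max hprim), hlc_to_prim⟩,
    ⟨fun hlc => hprim_to_max (hlc_to_prim hlc), hmax_to_lc⟩⟩
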